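/- arXiv:2002.09379 — 7 statements merged into one kernel-verified Lean document; each statement's English description precedes it below -/
import Mathlib

section
/- Let A be a commutative ring and g : M → N a morphism of A-modules where M is finitely generated and N is finite projective. If for every maximal ideal 𝔪 of A, the induced map M ⊗_A A/𝔪 → N ⊗_A A/𝔪 is an isomorphism, then g is an isomorphism. -/
/-!
Both the cokernel and the kernel of `g` are finitely generated: the cokernel as a quotient of `N`,
the kernel because `N` is finitely presented. Right exactness of `(A ⧸ 𝔪) ⊗ -` kills the fibres of
the cokernel, so `g` is surjective by Nakayama's lemma. Then `0 → ker g → M → N → 0` stays exact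
after tensoring, since `N` is flat, so the fibres of the kernel vanish as well.
-/

open TensorProduct

theorem Module.subsingleton_of_forall_isMaximal_subsingleton_quotient_tensor
    {A P : Type*} [CommRing A] [AddCommGroup P] [Module A P] [Module.Finite A P]
    (h : ∀ 𝔪 : Ideal A, 𝔪.IsMaximal → Subsingleton ((A ⧸ 𝔪) ⊗[A] P)) :
    Subsingleton P := by
  rw [← Module.annihilator_eq_top_iff (R := A)]
  by_contra hann
  obtain ⟨𝔪, h𝔪, hle⟩ := Ideal.exists_le_maximal _ hann
  have : Subsingleton (P ⧸ (𝔪 • ⊤ : Submodule A P)) :=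
    have := h 𝔪 h𝔪
    (quotTensorEquivQuotSMul P 𝔪).symm.toEquiv.subsingleton
  obtain ⟨r, hr1, hr⟩ := Submodule.exists_sub_one_mem_and_smul_eq_zero_of_fg_of_le_smul
    𝔪 ⊤ Module.Finite.fg_top (Submodule.Quotient.subsingleton_iff.mp this).ge
  have hr𝔪 : r ∈ 𝔪 := hle (Module.mem_annihilator.mpr fun m ↦ hr m Submodule.mem_top)
  exact h𝔪.ne_top (Ideal.eq_top_of_isUnit_mem _ (by simpa using 𝔪.sub_mem hr𝔪 hr1) isUnit_one)

section

variable {A M N : Type*} [CommRing A] [AddCommGroup M] [Module A M] [AddCommGroup N] [Module A N]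

theorem LinearMap.surjective_of_forall_isMaximal_surjective_lTensor_quotient
    [Module.Finite A N] (f : M →ₗ[A] N)
    (h : ∀ 𝔪 : Ideal A, 𝔪.IsMaximal → Function.Surjective (f.lTensor (A ⧸ 𝔪))) :
    Function.Surjective f := by
  rw [← LinearMap.range_eq_top, ← Submodule.Quotient.subsingleton_iff]
  refine Module.subsingleton_of_forall_isMaximal_subsingleton_quotient_tensor (A := A) fun 𝔪 h𝔪 ↦ ?_
  have hexact := lTensor_exact (A ⧸ 𝔪) (LinearMap.exact_map_mkQ_range f)
    (Submodule.mkQ_surjective _)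
  refine subsingleton_of_forall_eq 0 fun y ↦ ?_
  obtain ⟨x, rfl⟩ := (f.range.mkQ.lTensor_surjective (A ⧸ 𝔪) (Submodule.mkQ_surjective _)) y
  obtain ⟨z, rfl⟩ := h 𝔪 h𝔪 x
  exact hexact.apply_apply_eq_zero z

theorem LinearMap.injective_of_forall_isMaximal_injective_lTensor_quotient
    [Module.Finite A M] [Module.FinitePresentation A N] [Module.Flat A N]
    (f : M →ₗ[A] N) (hf : Function.Surjective f)
    (h : ∀ 𝔪 : Ideal A, 𝔪.IsMaximal → Function.Injective (f.lTensor (A ⧸ 𝔪))) :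
    Function.Injective f := by
  have : Module.Finite A (LinearMap.ker f) := .of_fg (Module.FinitePresentation.fg_ker f hf)
  rw [← LinearMap.ker_eq_bot, ← Submodule.subsingleton_iff_eq_bot]
  refine Module.subsingleton_of_forall_isMaximal_subsingleton_quotient_tensor (A := A) fun 𝔪 h𝔪 ↦ ?_
  have hexact := f.exact_subtype_ker_map
  have hincl := LinearMap.lTensor_injective_of_exact_of_flat f hf _
    (LinearMap.ker f).injective_subtype hexact (A ⧸ 𝔪)
  refine subsingleton_of_forall_eq 0 fun x ↦ hincl ((h 𝔪 h𝔪) ?_)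
  rw [map_zero, map_zero, ← LinearMap.lTensor_comp_apply, hexact.linearMap_comp_eq_zero,
    LinearMap.lTensor_zero, LinearMap.zero_apply]

end

/-- If `g : M → N` is a map of `A`-modules with `M` finitely generated and `N` finite
projective, and `g ⊗ A/𝔪` is an isomorphism for every maximal ideal `𝔪`, then `g` is an
isomorphism. -/
theorem stmt_0 {A : Type*} [CommRing A] {M N : Type*}
    [AddCommGroup M] [Module A M] [AddCommGroup N] [Module A N]
    [Module.Finite A M] [Module.Finite A N] [Module.Projective A N]
    (g : M →ₗ[A] N)
    (h : ∀ 𝔪 : Ideal A, 𝔪.IsMaximal →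
      Function.Bijective (LinearMap.baseChange (A ⧸ 𝔪) g)) :
    Function.Bijective g := by
  replace h (𝔪 : Ideal A) (h𝔪 : 𝔪.IsMaximal) : Function.Bijective (g.lTensor (A ⧸ 𝔪)) := by
    rw [← LinearMap.baseChange_eq_ltensor]
    exact h 𝔪 h𝔪
  have hsurj := g.surjective_of_forall_isMaximal_surjective_lTensor_quotient
    fun 𝔪 h𝔪 ↦ (h 𝔪 h𝔪).2
  have := Module.finitePresentation_of_projective A N
  exact ⟨g.injective_of_forall_isMaximal_injective_lTensor_quotient hsurj
    fun 𝔪 h𝔪 ↦ (h 𝔪 h𝔪).1, hsurj⟩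
end

section
/- Let A be a commutative ring and M' →^φ M →^ψ M' →^φ M a sequence of finite projective A-modules with φ∘ψ = 0 and ψ∘φ = 0. If for every maximal ideal 𝔪 the sequence tensored with the residue field κ(𝔪) is exact, then the original sequence M' →^φ M →^ψ M' →^φ M is exact. -/
/-!
Exactness at `M` is checked one element at a time: for `x ∈ ker ψ` and every maximal ideal `𝔪`
we find `a ∉ 𝔪` with `a • x ∈ range φ`. Over the field `κ(𝔪)` the exact pair admits a homotopy
`Φ H₁ + H₂ Ψ = id`; by projectivity `H₁, H₂` lift to `h₁, h₂` over `A`, so `e = φ h₁ + h₂ ψ` is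
the identity modulo `𝔪`. Since `e` preserves `range φ` and `e x = φ (h₁ x)`, the endomorphism
`id - e` of the finite module `M ⧸ range φ` fixes the class of `x` and has range in
`𝔪 • (M ⧸ range φ)`, and Cayley–Hamilton produces `a ≡ 1 mod 𝔪` with `a • x ∈ range φ`.
Exactness at `M'` is the same statement with `φ` and `ψ` swapped.
-/

open TensorProduct Polynomial

section DivisionRing

variable {K V W U : Type*} [DivisionRing K] [AddCommGroup V] [Module K V]
  [AddCommGroup W] [Module K W] [AddCommGroup U] [Module K U]

theorem LinearMap.exists_comp_eq_of_ker_le {f : V →ₗ[K] W} {g : V →ₗ[K] U}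
    (hfg : LinearMap.ker f ≤ LinearMap.ker g) : ∃ h : W →ₗ[K] U, h ∘ₗ f = g := by
  obtain ⟨r, hr⟩ := ((LinearMap.ker f).liftQ f le_rfl).exists_leftInverse_of_injective
    (Submodule.ker_liftQ_eq_bot _ _ _ le_rfl)
  refine ⟨(LinearMap.ker f).liftQ g hfg ∘ₗ r, ?_⟩
  ext v
  simpa using congr(((LinearMap.ker f).liftQ g hfg) ($hr (Submodule.Quotient.mk v)))

theorem Function.Exact.exists_homotopy_eq_id {Φ : W →ₗ[K] V} {Ψ : V →ₗ[K] W}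
    (hex : Function.Exact Φ Ψ) :
    ∃ (H₁ : V →ₗ[K] W) (H₂ : W →ₗ[K] V), Φ ∘ₗ H₁ + H₂ ∘ₗ Ψ = LinearMap.id := by
  obtain ⟨r, hr⟩ := (LinearMap.ker Ψ).subtype.exists_leftInverse_of_injective
    (LinearMap.ker Ψ).ker_subtype
  set π := (LinearMap.ker Ψ).subtype ∘ₗ r
  have hπ (v : V) (hv : v ∈ LinearMap.ker Ψ) : π v = v :=
    congrArg Subtype.val (LinearMap.congr_fun hr ⟨v, hv⟩)
  obtain ⟨H₁, hH₁⟩ := Module.projective_lifting_property Φ.rangeRestrict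
    (π.codRestrict (LinearMap.range Φ) fun v => hex.linearMap_ker_eq ▸ (r v).2)
    Φ.surjective_rangeRestrict
  obtain ⟨H₂, hH₂⟩ := LinearMap.exists_comp_eq_of_ker_le (f := Ψ) (g := LinearMap.id - π)
    fun v hv => by simp [hπ v hv]
  refine ⟨H₁, H₂, ?_⟩
  have hΦH₁ : Φ ∘ₗ H₁ = π := by
    ext v
    exact congrArg Subtype.val (LinearMap.congr_fun hH₁ v)
  rw [hH₂, hΦH₁, add_sub_cancel]

end DivisionRing

section CommRing

variable {A : Type*} [CommRing A]

theorem Submodule.mem_of_forall_isMaximal_exists_smul_mem {M : Type*} [AddCommGroup M]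
    [Module A M] {N : Submodule A M} {x : M}
    (h : ∀ 𝔪 : Ideal A, 𝔪.IsMaximal → ∃ a ∉ 𝔪, a • x ∈ N) : x ∈ N := by
  by_contra hx
  obtain ⟨𝔪, h𝔪, hle⟩ := Ideal.exists_le_maximal (N.colon {x})
    fun htop => hx ((N.colon_eq_top_iff_subset {x}).mp htop rfl)
  obtain ⟨a, ha, hax⟩ := h 𝔪 h𝔪
  exact ha (hle (Submodule.mem_colon_singleton.mpr hax))

theorem TensorProduct.one_tmul_eq_zero_iff_mem_smul_top {M : Type*} [AddCommGroup M]
    [Module A M] (I : Ideal A) (x : M) :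
    (1 : A ⧸ I) ⊗ₜ[A] x = 0 ↔ x ∈ I • (⊤ : Submodule A M) := by
  rw [← (quotTensorEquivQuotSMul M I).map_eq_zero_iff, quotTensorEquivQuotSMul_mk_one_tmul,
    Submodule.Quotient.mk_eq_zero]

theorem LinearMap.range_le_smul_top_of_baseChange_eq_zero {M N : Type*} [AddCommGroup M]
    [Module A M] [AddCommGroup N] [Module A N] (I : Ideal A) {f : M →ₗ[A] N}
    (hf : f.baseChange (A ⧸ I) = 0) : LinearMap.range f ≤ I • ⊤ := by
  rintro _ ⟨m, rfl⟩
  rw [← one_tmul_eq_zero_iff_mem_smul_top, ← baseChange_tmul, hf, zero_apply]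

theorem LinearMap.exists_baseChange_eq {B P N : Type*} [CommRing B] [Algebra A B]
    (hB : Function.Surjective (algebraMap A B)) [AddCommGroup P] [Module A P]
    [Module.Projective A P] [AddCommGroup N] [Module A N] (H : B ⊗[A] P →ₗ[B] B ⊗[A] N) :
    ∃ h : P →ₗ[A] N, h.baseChange B = H := by
  obtain ⟨h, hh⟩ := Module.projective_lifting_property (TensorProduct.mk A B N 1)
    (H.restrictScalars A ∘ₗ TensorProduct.mk A B P 1) (TensorProduct.mk_surjective A N B hB)
  refine ⟨h, ?_⟩
  ext p
  exact LinearMap.congr_fun hh p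

theorem Module.End.exists_sub_one_mem_and_smul_eq_zero_of_range_le_smul {Q : Type*}
    [AddCommGroup Q] [Module A Q] [Module.Finite A Q] {I : Ideal A} {f : Module.End A Q}
    (hf : LinearMap.range f ≤ I • ⊤) {y : Q} (hy : f y = y) :
    ∃ a : A, a - 1 ∈ I ∧ a • y = 0 := by
  obtain ⟨p, hmonic, -, hcoeff, hp⟩ :=
    LinearMap.exists_monic_and_natDegree_eq_and_coeff_mem_pow_and_aeval_eq_zero A f I hf
  refine ⟨p.eval 1, ?_, ?_⟩
  · have hlow : ∀ i ∈ Finset.range p.natDegree, p.coeff i ∈ I := fun i hi =>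
      Ideal.pow_le_self (Nat.sub_ne_zero_of_lt (Finset.mem_range.mp hi)) (hcoeff i)
    rw [eval_eq_sum_range, Finset.sum_range_succ, hmonic.coeff_natDegree]
    simpa using I.sum_mem hlow
  · rw [← aeval_apply_of_mem_apply_eq_smul (p := p) (by rwa [one_smul]), hp,
      LinearMap.zero_apply]

variable {M' M : Type*} [AddCommGroup M'] [Module A M'] [AddCommGroup M] [Module A M]

theorem exists_homotopy_range_le_smul_of_exact_baseChange (𝔪 : Ideal A) [𝔪.IsMaximal]
    [Module.Projective A M'] [Module.Projective A M] {φ : M' →ₗ[A] M} {ψ : M →ₗ[A] M'}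
    (hex : Function.Exact (φ.baseChange (A ⧸ 𝔪)) (ψ.baseChange (A ⧸ 𝔪))) :
    ∃ (h₁ : M →ₗ[A] M') (h₂ : M' →ₗ[A] M),
      LinearMap.range (LinearMap.id - (φ ∘ₗ h₁ + h₂ ∘ₗ ψ)) ≤ 𝔪 • ⊤ := by
  let := Ideal.Quotient.field 𝔪
  obtain ⟨H₁, H₂, hH⟩ := hex.exists_homotopy_eq_id
  obtain ⟨h₁, rfl⟩ := LinearMap.exists_baseChange_eq Ideal.Quotient.mk_surjective H₁
  obtain ⟨h₂, rfl⟩ := LinearMap.exists_baseChange_eq Ideal.Quotient.mk_surjective H₂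
  refine ⟨h₁, h₂, LinearMap.range_le_smul_top_of_baseChange_eq_zero 𝔪 ?_⟩
  rw [LinearMap.baseChange_sub, LinearMap.baseChange_add, LinearMap.baseChange_comp,
    LinearMap.baseChange_comp, hH, LinearMap.baseChange_id]
  exact sub_self (LinearMap.id : (A ⧸ 𝔪) ⊗[A] M →ₗ[A ⧸ 𝔪] (A ⧸ 𝔪) ⊗[A] M)

theorem exists_sub_one_mem_and_smul_mem_range_of_homotopy [Module.Finite A M]
    {φ : M' →ₗ[A] M} {ψ : M →ₗ[A] M'} (hψφ : ψ ∘ₗ φ = 0) {I : Ideal A}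
    {h₁ : M →ₗ[A] M'} {h₂ : M' →ₗ[A] M}
    (hI : LinearMap.range (LinearMap.id - (φ ∘ₗ h₁ + h₂ ∘ₗ ψ)) ≤ I • ⊤)
    {x : M} (hx : ψ x = 0) : ∃ a : A, a - 1 ∈ I ∧ a • x ∈ LinearMap.range φ := by
  set f := LinearMap.id - (φ ∘ₗ h₁ + h₂ ∘ₗ ψ)
  have hf : LinearMap.range φ ≤ (LinearMap.range φ).comap f := by
    rintro _ ⟨z, rfl⟩
    have hψz : ψ (φ z) = 0 := LinearMap.congr_fun hψφ z
    exact ⟨z - h₁ (φ z), by simp [f, hψz]⟩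
  set f' := (LinearMap.range φ).mapQ (LinearMap.range φ) f hf
  have hf' : LinearMap.range f' ≤ I • ⊤ := by
    rintro _ ⟨q, rfl⟩
    obtain ⟨m, rfl⟩ := Submodule.Quotient.mk_surjective _ q
    exact Submodule.smul_top_le_comap_smul_top I (LinearMap.range φ).mkQ (hI ⟨m, rfl⟩)
  obtain ⟨a, ha, hax⟩ := Module.End.exists_sub_one_mem_and_smul_eq_zero_of_range_le_smul hf'
    (y := Submodule.Quotient.mk x) <| by
      rw [Submodule.mapQ_apply, Submodule.Quotient.eq]
      exact ⟨-h₁ x, by simp [f, hx]⟩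
  exact ⟨a, ha, (Submodule.Quotient.mk_eq_zero _).mp hax⟩

theorem LinearMap.exact_of_forall_exact_baseChange_quotient [Module.Projective A M']
    [Module.Finite A M] [Module.Projective A M] {φ : M' →ₗ[A] M} {ψ : M →ₗ[A] M'}
    (hψφ : ψ ∘ₗ φ = 0)
    (h : ∀ 𝔪 : Ideal A, 𝔪.IsMaximal →
      Function.Exact (φ.baseChange (A ⧸ 𝔪)) (ψ.baseChange (A ⧸ 𝔪))) :
    Function.Exact φ ψ := by
  refine LinearMap.exact_of_comp_of_mem_range hψφ fun x hx =>
    Submodule.mem_of_forall_isMaximal_exists_smul_mem fun 𝔪 h𝔪 => ?_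
  obtain ⟨h₁, h₂, hI⟩ := exists_homotopy_range_le_smul_of_exact_baseChange 𝔪 (h 𝔪 h𝔪)
  obtain ⟨a, ha, hax⟩ := exists_sub_one_mem_and_smul_mem_range_of_homotopy hψφ hI hx
  refine ⟨a, fun ha' => h𝔪.ne_top ((Ideal.eq_top_iff_one 𝔪).mpr ?_), hax⟩
  simpa using 𝔪.sub_mem ha' ha

end CommRing

/-- Given a sequence `M' →φ M →ψ M' →φ M` of finite projective `A`-modules with
`φ ∘ ψ = 0` and `ψ ∘ φ = 0`, if the sequence tensored with every residue field
`κ(𝔪) = A/𝔪` at a maximal ideal is exact (at both middle positions), then the original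
sequence is exact. -/
theorem stmt_3 {A : Type*} [CommRing A] {M' M : Type*}
    [AddCommGroup M'] [Module A M'] [AddCommGroup M] [Module A M]
    [Module.Finite A M'] [Module.Projective A M']
    [Module.Finite A M] [Module.Projective A M]
    (φ : M' →ₗ[A] M) (ψ : M →ₗ[A] M')
    (hφψ : φ ∘ₗ ψ = 0) (hψφ : ψ ∘ₗ φ = 0)
    (h : ∀ 𝔪 : Ideal A, 𝔪.IsMaximal →
      Function.Exact (LinearMap.baseChange (A ⧸ 𝔪) φ) (LinearMap.baseChange (A ⧸ 𝔪) ψ) ∧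
      Function.Exact (LinearMap.baseChange (A ⧸ 𝔪) ψ) (LinearMap.baseChange (A ⧸ 𝔪) φ)) :
    Function.Exact φ ψ ∧ Function.Exact ψ φ :=
  ⟨LinearMap.exact_of_forall_exact_baseChange_quotient hψφ fun 𝔪 h𝔪 => (h 𝔪 h𝔪).1,
    LinearMap.exact_of_forall_exact_baseChange_quotient hφψ fun 𝔪 h𝔪 => (h 𝔪 h𝔪).2⟩
end

section
/- Let A be a commutative ring, M and M' finite projective A-modules, φ : M' → M and ψ : M → M' A-linear maps with φ∘ψ = 0 and ψ∘φ = 0. If the sequence M →^ψ M' →^φ M is exact and coker(φ) is a finite projective A-module, then im(φ) is a direct summand of M, im(ψ) is a direct summand of M', ker(φ) is a direct summand of M', ker(ψ) is a direct summand of M, and coker(ψ) is a finite projective A-module. -/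
/-!
Everything follows from the fact that a surjection onto a projective module splits, so its
kernel is a direct summand. Since `coker φ` is projective, `im φ` is a summand of `M`, hence
projective; so `M' ↠ im φ` splits and `ker φ = im ψ` is a summand of `M'`. Repeating the
argument for `ψ` makes `ker ψ` a summand of `M`, and `coker ψ` is isomorphic to a complement of
`im ψ`, a summand of the projective module `M'`.
-/

namespace LinearMap

variable {R E F : Type*} [Ring R] [AddCommGroup E] [Module R E] [AddCommGroup F] [Module R F]

theorem isCompl_ker_range_of_comp_eq_id {f : E →ₗ[R] F} {g : F →ₗ[R] E} (h : f ∘ₗ g = id) :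
    IsCompl (ker f) (range g) := by
  have hfg : ∀ y, f (g y) = y := fun y => congr($h y)
  have hidem : IsIdempotentElem (g ∘ₗ f) := by
    ext x
    simp [hfg]
  have hker : ker (g ∘ₗ f) = ker f :=
    ker_comp_of_ker_eq_bot f (ker_eq_bot_of_inverse h)
  have hrange : range (g ∘ₗ f) = range g :=
    range_comp_of_range_eq_top g (range_eq_top.mpr fun y => ⟨g y, hfg y⟩)
  simpa [hker, hrange] using (IsIdempotentElem.isCompl hidem).symm

theorem exists_isCompl_ker_of_surjective [Module.Projective R F] (f : E →ₗ[R] F)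
    (hf : Function.Surjective f) : ∃ C : Submodule R E, IsCompl (ker f) C := by
  obtain ⟨g, hg⟩ := Module.projective_lifting_property f id hf
  exact ⟨range g, isCompl_ker_range_of_comp_eq_id hg⟩

end LinearMap

namespace Submodule

variable {R E : Type*} [Ring R] [AddCommGroup E] [Module R E] [Module.Projective R E]

theorem projective_of_isCompl {p q : Submodule R E} (h : IsCompl p q) :
    Module.Projective R p :=
  Module.Projective.of_split p.subtype (p.projectionOnto q h) (by ext; simp)

theorem projective_quotient_of_isCompl {p q : Submodule R E} (h : IsCompl p q) :
    Module.Projective R (E ⧸ p) :=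
  have := projective_of_isCompl h.symm
  Module.Projective.of_equiv (p.quotientEquivOfIsCompl q h).symm

end Submodule

theorem Submodule.exists_isCompl_of_projective_quotient {R E : Type*} [Ring R] [AddCommGroup E]
    [Module R E] (p : Submodule R E) [Module.Projective R (E ⧸ p)] :
    ∃ C : Submodule R E, IsCompl p C := by
  simpa using p.mkQ.exists_isCompl_ker_of_surjective p.mkQ_surjective

theorem LinearMap.exists_isCompl_ker_of_isCompl_range {R E F : Type*} [Ring R]
    [AddCommGroup E] [Module R E] [AddCommGroup F] [Module R F] [Module.Projective R F]
    (f : E →ₗ[R] F) {C : Submodule R F} (h : IsCompl (range f) C) :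
    ∃ D : Submodule R E, IsCompl (ker f) D := by
  have := Submodule.projective_of_isCompl h
  simpa using f.rangeRestrict.exists_isCompl_ker_of_surjective f.surjective_rangeRestrict

theorem stmt_4_general {A : Type*} [CommRing A] {M' M : Type*}
    [AddCommGroup M'] [Module A M'] [AddCommGroup M] [Module A M]
    [Module.Finite A M'] [Module.Projective A M']
    [Module.Projective A M]
    (φ : M' →ₗ[A] M) (ψ : M →ₗ[A] M')
    (hexact : Function.Exact ψ φ)
    (hcoker : Module.Finite A (M ⧸ LinearMap.range φ) ∧
      Module.Projective A (M ⧸ LinearMap.range φ)) :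
    (∃ C : Submodule A M, IsCompl (LinearMap.range φ) C) ∧
    (∃ C : Submodule A M', IsCompl (LinearMap.range ψ) C) ∧
    (∃ C : Submodule A M', IsCompl (LinearMap.ker φ) C) ∧
    (∃ C : Submodule A M, IsCompl (LinearMap.ker ψ) C) ∧
    Module.Finite A (M' ⧸ LinearMap.range ψ) ∧
      Module.Projective A (M' ⧸ LinearMap.range ψ) := by
  have := hcoker.2
  obtain ⟨C₁, hφ⟩ := (LinearMap.range φ).exists_isCompl_of_projective_quotient
  obtain ⟨C₂, hkerφ⟩ := φ.exists_isCompl_ker_of_isCompl_range hφ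
  have hψ : IsCompl (LinearMap.range ψ) C₂ := LinearMap.exact_iff.mp hexact ▸ hkerφ
  obtain ⟨C₃, hkerψ⟩ := ψ.exists_isCompl_ker_of_isCompl_range hψ
  exact ⟨⟨C₁, hφ⟩, ⟨C₂, hψ⟩, ⟨C₂, hkerφ⟩, ⟨C₃, hkerψ⟩, inferInstance,
    Submodule.projective_quotient_of_isCompl hψ⟩

/-- Let `φ : M' → M` and `ψ : M → M'` be maps of finite projective `A`-modules with
`φ ∘ ψ = 0` and `ψ ∘ φ = 0`. If `M →ψ M' →φ M` is exact and `coker φ` is finite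
projective, then `im φ` is a direct summand of `M`, `im ψ` and `ker φ` are direct summands
of `M'`, `ker ψ` is a direct summand of `M`, and `coker ψ` is finite projective. -/
theorem stmt_4 {A : Type*} [CommRing A] {M' M : Type*}
    [AddCommGroup M'] [Module A M'] [AddCommGroup M] [Module A M]
    [Module.Finite A M'] [Module.Projective A M']
    [Module.Finite A M] [Module.Projective A M]
    (φ : M' →ₗ[A] M) (ψ : M →ₗ[A] M')
    (hφψ : φ ∘ₗ ψ = 0) (hψφ : ψ ∘ₗ φ = 0)
    (hexact : Function.Exact ψ φ)
    (hcoker : Module.Finite A (M ⧸ LinearMap.range φ) ∧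
      Module.Projective A (M ⧸ LinearMap.range φ)) :
    (∃ C : Submodule A M, IsCompl (LinearMap.range φ) C) ∧
    (∃ C : Submodule A M', IsCompl (LinearMap.range ψ) C) ∧
    (∃ C : Submodule A M', IsCompl (LinearMap.ker φ) C) ∧
    (∃ C : Submodule A M, IsCompl (LinearMap.ker ψ) C) ∧
    Module.Finite A (M' ⧸ LinearMap.range ψ) ∧
      Module.Projective A (M' ⧸ LinearMap.range ψ) :=
  stmt_4_general φ ψ hexact hcoker
end

section
/- Let W be a commutative ring and p, ξ ∈ W nonzerodivisors. Then W/ξW is p-torsion free if and only if W/pⁿW is ξ-torsion free for all natural numbers n ≥ 1. -/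
/-! Torsion-freeness of `W/b` under multiplication by `c` means `b ∣ c * x → b ∣ x`. In this form
the statement for `n = 1` is symmetric in `p` and `ξ`: from `ξ * x = p * y` one gets `ξ ∣ y`, and
cancelling `ξ` gives `p ∣ x`. The case of general `n` follows from `n = 1` by dévissage along
`p^(n+1) = p^n * p`, cancelling the regular element `p^n`. -/

section

open Ideal

variable {W : Type*} [CommRing W]

theorem isSMulRegular_quotient_span_singleton_iff {b c : W} :
    IsSMulRegular (W ⧸ span {b}) c ↔ ∀ x, b ∣ c * x → b ∣ x := by
  simp only [isSMulRegular_quotient_iff_mem_of_smul_mem, smul_eq_mul, mem_span_singleton]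

theorem isSMulRegular_quotient_span_singleton_swap {a b : W} (hb : IsLeftRegular b)
    (h : IsSMulRegular (W ⧸ span {b}) a) : IsSMulRegular (W ⧸ span {a}) b := by
  rw [isSMulRegular_quotient_span_singleton_iff] at h ⊢
  rintro x ⟨y, hy⟩
  obtain ⟨z, rfl⟩ := h y ⟨x, hy.symm⟩
  exact ⟨z, hb <| show b * x = b * (a * z) by rw [hy]; ring⟩

theorem isSMulRegular_quotient_span_singleton_mul {a b c : W} (ha : IsLeftRegular a)
    (hca : IsSMulRegular (W ⧸ span {a}) c) (hcb : IsSMulRegular (W ⧸ span {b}) c) :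
    IsSMulRegular (W ⧸ span {a * b}) c := by
  rw [isSMulRegular_quotient_span_singleton_iff] at hca hcb ⊢
  intro x hx
  obtain ⟨y, rfl⟩ := hca x (dvd_trans (dvd_mul_right a b) hx)
  rw [mul_left_comm, ha.dvd_cancel_left] at hx
  rw [ha.dvd_cancel_left]
  exact hcb y hx

theorem isSMulRegular_quotient_span_singleton_pow {p c : W} (hp : IsLeftRegular p)
    (h : IsSMulRegular (W ⧸ span {p}) c) (n : ℕ) :
    IsSMulRegular (W ⧸ span {p ^ n}) c := by
  induction n with
  | zero =>
    rw [isSMulRegular_quotient_span_singleton_iff]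
    exact fun x _ => by rw [pow_zero]; exact one_dvd x
  | succ n ih =>
    rw [pow_succ]
    exact isSMulRegular_quotient_span_singleton_mul (hp.pow n) ih h

end

/-- For nonzerodivisors `p, ξ` of a commutative ring `W`, the quotient `W/ξ` is
`p`-torsion free if and only if `W/pⁿ` is `ξ`-torsion free for all `n ≥ 1`. -/
theorem stmt_8 {W : Type*} [CommRing W] (p ξ : W)
    (hp : p ∈ nonZeroDivisors W) (hξ : ξ ∈ nonZeroDivisors W) :
    Function.Injective (fun a : W ⧸ Ideal.span {ξ} => p • a) ↔
      ∀ n : ℕ, 1 ≤ n →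
        Function.Injective (fun a : W ⧸ Ideal.span {p ^ n} => ξ • a) := by
  have hp' : IsLeftRegular p := (isRegular_iff_mem_nonZeroDivisors.mpr hp).left
  have hξ' : IsLeftRegular ξ := (isRegular_iff_mem_nonZeroDivisors.mpr hξ).left
  constructor
  · intro h n _
    exact isSMulRegular_quotient_span_singleton_pow hp'
      (isSMulRegular_quotient_span_singleton_swap hξ' h) n
  · intro h
    have h₁ := h 1 le_rfl
    rw [pow_one] at h₁
    exact isSMulRegular_quotient_span_singleton_swap hp' h₁
end

section
/- Let A be a commutative ring, ξ ∈ A, n ∈ ℕ, and M an A-module fitting into a short exact sequence 0 → P₁ → P₀ → M → 0 with P₀, P₁ finite projective A-modules and pⁿP₀ ⊆ P₁ (for an element p ∈ A). Then the multiplication map induces an injection pⁿP₀/pⁿP₁ ↪ P₁/pⁿP₁; in particular, if A/pⁿA is ξ-torsion free and P₁/pⁿP₁ is ξ-torsion free, then M ≅ pⁿP₀/pⁿP₁ is ξ-torsion free. -/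
/-! Multiplication by `pⁿ` induces a map `P₀/P₁ → P₁/pⁿP₁`; it is injective because `pⁿ` is a
nonzerodivisor and hence regular on the projective, so flat, module `P₀`. An injective linear
map reflects `ξ`-regularity, so `P₀/P₁` inherits it from `P₁/pⁿP₁`. -/

namespace Submodule

variable {A M : Type*} [CommRing A] [AddCommGroup M] [Module A M]

theorem smul_mem_ideal_span_singleton_smul_top (r : A) (x : M) :
    r • x ∈ (Ideal.span {r} • ⊤ : Submodule A M) :=
  smul_mem_smul (Ideal.mem_span_singleton_self r) trivial

theorem mem_ideal_span_singleton_smul_top_iff {N : Submodule A M} {r : A} {z : N} :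
    z ∈ (Ideal.span {r} • ⊤ : Submodule A N) ↔ ∃ y ∈ N, r • y = z := by
  rw [mem_smul_top_iff, ideal_span_singleton_smul, mem_smul_pointwise_iff_exists]

variable {N : Submodule A M} {r : A}

/-- Induced by `x ↦ r • x`. -/
def quotientToQuotientSMulTop (hN : Ideal.span {r} • ⊤ ≤ N) :
    (M ⧸ N) →ₗ[A] N ⧸ (Ideal.span {r} • ⊤ : Submodule A N) :=
  N.liftQ ((Ideal.span {r} • ⊤ : Submodule A N).mkQ ∘ₗ
      (LinearMap.lsmul A M r).codRestrict N
        fun x => hN (smul_mem_ideal_span_singleton_smul_top r x)) <| by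
    intro y hy
    simp only [LinearMap.mem_ker, LinearMap.comp_apply, mkQ_apply, Quotient.mk_eq_zero,
      mem_ideal_span_singleton_smul_top_iff]
    exact ⟨y, hy, rfl⟩

theorem injective_quotientToQuotientSMulTop (hN : Ideal.span {r} • ⊤ ≤ N)
    (hr : IsSMulRegular M r) : Function.Injective (quotientToQuotientSMulTop hN) := by
  rw [← LinearMap.ker_eq_bot, eq_bot_iff]
  intro x hx
  obtain ⟨x, rfl⟩ := N.mkQ_surjective x
  obtain ⟨y, hy, hyx⟩ := mem_ideal_span_singleton_smul_top_iff.mp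
    ((Quotient.mk_eq_zero _).mp hx)
  have hyx : y = x := hr hyx
  simpa [← hyx] using hy

end Submodule

theorem stmt_9_general {A : Type*} [CommRing A] (p ξ : A) (n : ℕ)
    (hp : p ∈ nonZeroDivisors A)
    {P₀ : Type*} [AddCommGroup P₀] [Module A P₀]
    [Module.Projective A P₀]
    (P₁ : Submodule A P₀)
    (hsub : (Ideal.span {p ^ n} • ⊤ : Submodule A P₀) ≤ P₁) :
    Submodule.map (Ideal.span {p ^ n} • P₁).mkQ (Ideal.span {p ^ n} • ⊤) ≤
        Submodule.map (Ideal.span {p ^ n} • P₁).mkQ P₁ ∧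
      ((Function.Injective (fun a : A ⧸ Ideal.span {p ^ n} => ξ • a)) →
       (Function.Injective
          (fun x : P₁ ⧸ (Ideal.span {p ^ n} • ⊤ : Submodule A P₁) => ξ • x)) →
        Function.Injective (fun m : P₀ ⧸ P₁ => ξ • m)) := by
  refine ⟨Submodule.map_mono hsub, fun _ hξ => ?_⟩
  have hpn : IsSMulRegular P₀ (p ^ n) :=
    Module.Flat.isSMulRegular_of_nonZeroDivisors (pow_mem hp n)
  exact IsSMulRegular.of_injective _ (Submodule.injective_quotientToQuotientSMulTop hsub hpn) hξ

/-- Let `P₀` be a finite projective module over `A`, `p ∈ A` a nonzerodivisor, and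
`P₁ ⊆ P₀` a finite projective submodule with `pⁿP₀ ⊆ P₁` (so `M = P₀/P₁` is killed by
`pⁿ`).  Then the image of `pⁿP₀` in `P₀/pⁿP₁` is contained in the image of `P₁` (the
inclusion `pⁿP₀/pⁿP₁ ↪ P₁/pⁿP₁`); and if `A/pⁿ` and `P₁/pⁿP₁` are `ξ`-torsion free, then
`M = P₀/P₁` is `ξ`-torsion free. -/
theorem stmt_9 {A : Type*} [CommRing A] (p ξ : A) (n : ℕ)
    (hp : p ∈ nonZeroDivisors A)
    {P₀ : Type*} [AddCommGroup P₀] [Module A P₀]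
    [Module.Finite A P₀] [Module.Projective A P₀]
    (P₁ : Submodule A P₀) [Module.Finite A P₁] [Module.Projective A P₁]
    (hsub : (Ideal.span {p ^ n} • ⊤ : Submodule A P₀) ≤ P₁) :
    Submodule.map (Ideal.span {p ^ n} • P₁).mkQ (Ideal.span {p ^ n} • ⊤) ≤
        Submodule.map (Ideal.span {p ^ n} • P₁).mkQ P₁ ∧
      ((Function.Injective (fun a : A ⧸ Ideal.span {p ^ n} => ξ • a)) →
       (Function.Injective
          (fun x : P₁ ⧸ (Ideal.span {p ^ n} • ⊤ : Submodule A P₁) => ξ • x)) →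
        Function.Injective (fun m : P₀ ⧸ P₁ => ξ • m)) :=
  stmt_9_general p ξ n hp P₁ hsub
end

section
/- Let A be a commutative ring and I an ideal contained in the Jacobson radical. Suppose M is a finite projective A-module, Q' a finite projective A-module, and there are A-linear maps u : Q' → M and v : M → Q' such that v∘u is an isomorphism modulo I. Then v∘u is an isomorphism, u is injective, and the image u(Q') is a direct summand of M. -/
/-!
Nakayama's lemma lifts surjectivity of `v ∘ u` from `Q' / I Q'` to `Q'`, and a surjective
endomorphism of a finite module over a commutative ring is bijective (Vasconcelos). Then
`(v ∘ u)⁻¹ ∘ v` is a retraction of `u`, whose kernel complements the image of `u`.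
-/

/-- Any linear map sends `I • ⊤` into `I • ⊤`. -/
lemma smul_top_le_comap {A M N : Type*} [CommRing A]
    [AddCommGroup M] [Module A M] [AddCommGroup N] [Module A N]
    (I : Ideal A) (f : M →ₗ[A] N) :
    I • (⊤ : Submodule A M) ≤ (I • (⊤ : Submodule A N)).comap f := by
  rw [← Submodule.map_le_iff_le_comap, Submodule.map_smul'']
  exact Submodule.smul_mono le_rfl (Submodule.map_le_iff_le_comap.mpr le_top)

namespace LinearMap

variable {R M N : Type*} [CommRing R] [AddCommGroup M] [Module R M] [AddCommGroup N] [Module R N]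

theorem surjective_of_surjective_mapQ_smul_top [Module.Finite R N] {I : Ideal R}
    (hI : I ≤ (⊥ : Ideal R).jacobson) (f : M →ₗ[R] N)
    (hf : Function.Surjective (Submodule.mapQ (I • ⊤) (I • ⊤) f (smul_top_le_comap I f))) :
    Function.Surjective f :=
  f.surjective_of_surjective_comp_mkQ I hI <| by
    rw [← Submodule.mapQ_mkQ, coe_comp]
    exact hf.comp (Submodule.mkQ_surjective _)

theorem isCompl_range_ker_of_comp_eq_id {u : N →ₗ[R] M} {w : M →ₗ[R] N}
    (hwu : w ∘ₗ u = id) : IsCompl (range u) (ker w) := by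
  have hw : range w = ⊤ := range_eq_top.mpr fun n ↦ ⟨u n, congr($hwu n)⟩
  have hu : ker u = ⊥ := ker_eq_bot_of_inverse hwu
  have hidem : IsIdempotentElem (u ∘ₗ w) := by
    rw [IsIdempotentElem, Module.End.mul_eq_comp, comp_assoc, ← comp_assoc w, hwu, id_comp]
  simpa [range_comp_of_range_eq_top u hw, ker_comp_of_ker_eq_bot w hu] using IsIdempotentElem.isCompl hidem

end LinearMap

theorem stmt_13_general {A : Type*} [CommRing A] (I : Ideal A)
    (hI : I ≤ (⊥ : Ideal A).jacobson)
    {M Q' : Type*} [AddCommGroup M] [Module A M] [AddCommGroup Q'] [Module A Q']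
    [Module.Finite A Q']
    (u : Q' →ₗ[A] M) (v : M →ₗ[A] Q')
    (h : Function.Bijective
      (Submodule.mapQ (I • ⊤) (I • ⊤) (v ∘ₗ u) (smul_top_le_comap I (v ∘ₗ u)))) :
    Function.Bijective (v ∘ₗ u) ∧ Function.Injective u ∧
      ∃ C : Submodule A M, IsCompl (LinearMap.range u) C := by
  have hbij : Function.Bijective (v ∘ₗ u) :=
    OrzechProperty.bijective_of_surjective_endomorphism _
      (LinearMap.surjective_of_surjective_mapQ_smul_top hI _ h.2)
  let e := LinearEquiv.ofBijective _ hbij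
  have hretract : (e.symm.toLinearMap ∘ₗ v) ∘ₗ u = LinearMap.id := by
    ext q
    exact e.symm_apply_apply q
  exact ⟨hbij, Function.Injective.of_comp hbij.1, _,
    LinearMap.isCompl_range_ker_of_comp_eq_id hretract⟩

/-- Let `I` be an ideal contained in the Jacobson radical of `A`, `M`, `Q'` finite
projective `A`-modules, and `u : Q' → M`, `v : M → Q'` such that `v ∘ u` is an
isomorphism modulo `I`.  Then `v ∘ u` is an isomorphism, `u` is injective, and the image
of `u` is a direct summand of `M`. -/
theorem stmt_13 {A : Type*} [CommRing A] (I : Ideal A)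
    (hI : I ≤ (⊥ : Ideal A).jacobson)
    {M Q' : Type*} [AddCommGroup M] [Module A M] [AddCommGroup Q'] [Module A Q']
    [Module.Finite A M] [Module.Projective A M]
    [Module.Finite A Q'] [Module.Projective A Q']
    (u : Q' →ₗ[A] M) (v : M →ₗ[A] Q')
    (h : Function.Bijective
      (Submodule.mapQ (I • ⊤) (I • ⊤) (v ∘ₗ u) (smul_top_le_comap I (v ∘ₗ u)))) :
    Function.Bijective (v ∘ₗ u) ∧ Function.Injective u ∧
      ∃ C : Submodule A M, IsCompl (LinearMap.range u) C :=
  stmt_13_general I hI u v h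
end

section
/- Let A be a commutative ring and I an ideal contained in the Jacobson radical. Let M be a finite projective A-module and L, P ⊆ M submodules which are finite projective such that the natural map L/IL ⊕ P/IP → M/IM is an isomorphism. Then L ⊕ P → M is an isomorphism. -/
open LinearMap Submodule

section

variable {A N M : Type*} [CommRing A] [AddCommGroup N] [Module A N] [AddCommGroup M] [Module A M]
  {I : Ideal A}

theorem Submodule.ker_le_of_injective_mapQ {p : Submodule A N} {q : Submodule A M}
    {f : N →ₗ[A] M} {h : p ≤ q.comap f} (hf : Function.Injective (p.mapQ q f h)) :
    ker f ≤ p := by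
  intro x hx
  rw [← Quotient.mk_eq_zero]
  apply hf
  rw [map_zero, mapQ_apply, mem_ker.mp hx, Quotient.mk_zero]

theorem Submodule.surjective_of_surjective_mapQ_smul_top [Module.Finite A M]
    (hI : I ≤ (⊥ : Ideal A).jacobson) {f : N →ₗ[A] M}
    (hf : Function.Surjective ((I • ⊤ : Submodule A N).mapQ (I • ⊤) f
      (smul_top_le_comap I f))) :
    Function.Surjective f :=
  f.surjective_of_surjective_comp_mkQ I hI <| by
    rw [← mapQ_mkQ (I • ⊤) (I • ⊤) f (h := smul_top_le_comap I f)]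
    exact hf.comp (mkQ_surjective _)

theorem LinearMap.range_eq_bot_of_isIdempotentElem_of_le_smul_top [Module.Finite A N]
    (hI : I ≤ (⊥ : Ideal A).jacobson) {e : Module.End A N} (he : IsIdempotentElem e)
    (hle : range e ≤ I • ⊤) : range e = ⊥ := by
  have hfg : (range e).FG := by
    rw [range_eq_map]
    exact Module.Finite.fg_top.map e
  refine eq_bot_of_le_smul_of_le_jacobson_bot I _ hfg ?_ hI
  calc range e = (range e).map e := by rw [← range_comp, ← Module.End.mul_eq_comp, he.eq]
    _ ≤ (I • ⊤ : Submodule A N).map e := map_mono hle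
    _ = I • range e := by rw [map_smul'', Submodule.map_top]

theorem LinearMap.injective_of_surjective_of_ker_le_smul_top [Module.Finite A N]
    [Module.Projective A M] (hI : I ≤ (⊥ : Ideal A).jacobson) {f : N →ₗ[A] M}
    (hf : Function.Surjective f) (hker : ker f ≤ I • ⊤) : Function.Injective f := by
  obtain ⟨s, hs⟩ := Module.projective_lifting_property f LinearMap.id hf
  have he : IsIdempotentElem (s ∘ₗ f) := by
    rw [IsIdempotentElem, Module.End.mul_eq_comp, comp_assoc, ← comp_assoc f, hs, id_comp]
  have hker_eq : ker f = range (1 - s ∘ₗ f) := by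
    rw [he.one_sub.range_eq_ker_one_sub, sub_sub_cancel, ker_comp,
      ker_eq_bot_of_inverse hs, comap_bot]
  rw [← ker_eq_bot, hker_eq]
  exact range_eq_bot_of_isIdempotentElem_of_le_smul_top hI he.one_sub (hker_eq ▸ hker)

end

theorem stmt_14_general {A : Type*} [CommRing A] (I : Ideal A)
    (hI : I ≤ (⊥ : Ideal A).jacobson)
    {M L P : Type*} [AddCommGroup M] [Module A M]
    [AddCommGroup L] [Module A L] [AddCommGroup P] [Module A P]
    [Module.Finite A M] [Module.Projective A M]
    [Module.Finite A L]
    [Module.Finite A P]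
    (ιL : L →ₗ[A] M) (ιP : P →ₗ[A] M)
    (h : Function.Bijective
      (Submodule.mapQ (I • ⊤) (I • ⊤) (LinearMap.coprod ιL ιP)
        (smul_top_le_comap I (LinearMap.coprod ιL ιP)))) :
    Function.Bijective (LinearMap.coprod ιL ιP) := by
  have hsurj := surjective_of_surjective_mapQ_smul_top hI h.surjective
  exact ⟨injective_of_surjective_of_ker_le_smul_top hI hsurj (ker_le_of_injective_mapQ h.injective),
    hsurj⟩

/-- Let `I` be an ideal contained in the Jacobson radical of `A`, `M` a finite projective
`A`-module and `L, P` finite projective modules mapping to `M` such that the induced map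
`L/IL ⊕ P/IP → M/IM` is an isomorphism.  Then `L ⊕ P → M` is an isomorphism. -/
theorem stmt_14 {A : Type*} [CommRing A] (I : Ideal A)
    (hI : I ≤ (⊥ : Ideal A).jacobson)
    {M L P : Type*} [AddCommGroup M] [Module A M]
    [AddCommGroup L] [Module A L] [AddCommGroup P] [Module A P]
    [Module.Finite A M] [Module.Projective A M]
    [Module.Finite A L] [Module.Projective A L]
    [Module.Finite A P] [Module.Projective A P]
    (ιL : L →ₗ[A] M) (ιP : P →ₗ[A] M)
    (h : Function.Bijective
      (Submodule.mapQ (I • ⊤) (I • ⊤) (LinearMap.coprod ιL ιP)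
        (smul_top_le_comap I (LinearMap.coprod ιL ιP)))) :
    Function.Bijective (LinearMap.coprod ιL ιP) :=
  stmt_14_general I hI ιL ιP h
end
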